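/- arXiv:2311.00094 — 3 statements merged into one kernel-verified Lean document; each statement's English description precedes it below -/
import Mathlib

section
/- With the construction from the proof of Theorem 1, the posterior probability of the positive class is the logistic sigmoid of the signed partition gap: for every x ∈ Bool^k, P(y = true | x) = 1 / (1 + exp(−d(x))), where d(x) := Σ_{i : x_i = false} n_i − Σ_{i : x_i = true} n_i. -/
/-- Per-coordinate conditional probability table of the Naive Bayes construction in the
proof of Theorem 1: with `p := (1 - exp (-m)) / (exp m - exp (-m))` and `q := exp m * p`,
`nbTheta m b y` is `P(xᵢ = b | y)`. -/
noncomputable def nbTheta (m : ℕ) : Bool → Bool → ℝ := fun b y =>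
  let p : ℝ := (1 - Real.exp (-(m : ℝ))) / (Real.exp (m : ℝ) - Real.exp (-(m : ℝ)))
  let q : ℝ := Real.exp (m : ℝ) * p
  match b, y with
  | true, true => p
  | false, true => 1 - p
  | true, false => q
  | false, false => 1 - q

/-- The Naive Bayes joint probability mass function
`P (x, y) = (1/2) * ∏ i, θᵢ (xᵢ, y)` on `Bool^k × Bool`. -/
noncomputable def nbJoint {k : ℕ} (n : Fin k → ℕ) (x : Fin k → Bool) (y : Bool) : ℝ :=
  (1 / 2) * ∏ i, nbTheta (n i) (x i) y

/-- The marginal `P x = P (x, true) + P (x, false)`. -/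
noncomputable def nbMarg {k : ℕ} (n : Fin k → ℕ) (x : Fin k → Bool) : ℝ :=
  nbJoint n x true + nbJoint n x false

/-- The posterior `P(y = true | x) = P (x, true) / P x`. -/
noncomputable def nbPost {k : ℕ} (n : Fin k → ℕ) (x : Fin k → Bool) : ℝ :=
  nbJoint n x true / nbMarg n x

/-- The signed partition gap `d x = ∑_{i : xᵢ = false} nᵢ - ∑_{i : xᵢ = true} nᵢ`. -/
noncomputable def nbGap {k : ℕ} (n : Fin k → ℕ) (x : Fin k → Bool) : ℝ :=
  (∑ i ∈ Finset.univ.filter (fun i => x i = false), (n i : ℝ)) -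
    ∑ i ∈ Finset.univ.filter (fun i => x i = true), (n i : ℝ)

lemma nbTheta_true_pos {m : ℕ} (hm : 0 < m) (b : Bool) : 0 < nbTheta m b true := by
  have hm' : (0:ℝ) < (m:ℝ) := by exact_mod_cast hm
  have h1 : Real.exp (-(m:ℝ)) < 1 := by
    rw [Real.exp_lt_one_iff]; linarith
  have h2 : (1:ℝ) < Real.exp (m:ℝ) := by
    have := Real.add_one_le_exp (m:ℝ); linarith
  have hD : (0:ℝ) < Real.exp (m:ℝ) - Real.exp (-(m:ℝ)) := by linarith
  cases b
  · simp only [nbTheta]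
    rw [sub_pos, div_lt_one hD]; linarith
  · simp only [nbTheta]
    exact div_pos (by linarith) hD

lemma nbTheta_false_eq {m : ℕ} (hm : 0 < m) (b : Bool) :
    nbTheta m b false = Real.exp (if b then (m:ℝ) else -(m:ℝ)) * nbTheta m b true := by
  have hm' : (0:ℝ) < (m:ℝ) := by exact_mod_cast hm
  have h2 : (1:ℝ) < Real.exp (m:ℝ) := by
    have := Real.add_one_le_exp (m:ℝ); linarith
  have hE : Real.exp (m:ℝ) ≠ 0 := (Real.exp_pos _).ne'
  have hneg : Real.exp (-(m:ℝ)) = (Real.exp (m:ℝ))⁻¹ := Real.exp_neg _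
  have hD : Real.exp (m:ℝ) - Real.exp (-(m:ℝ)) ≠ 0 := by
    rw [hneg]
    have : (Real.exp (m:ℝ))⁻¹ < 1 := inv_lt_one_of_one_lt₀ h2
    nlinarith
  have hD2 : Real.exp (m:ℝ) ^ 2 - 1 ≠ 0 := by nlinarith
  have hD3 : (-1 + Real.exp (m:ℝ) ^ 2) ≠ 0 := by nlinarith
  cases b
  · simp only [nbTheta, if_neg Bool.false_ne_true, Bool.false_eq_true, if_false]
    rw [hneg] at hD ⊢
    field_simp
    linear_combination
  · simp [nbTheta]

/-- The posterior probability of the positive class is the logistic sigmoid of the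
signed partition gap: `P(y = true | x) = 1 / (1 + exp (-(d x)))`, where
`d x = ∑_{i : xᵢ = false} nᵢ - ∑_{i : xᵢ = true} nᵢ`. -/
theorem naive_bayes_posterior_sigmoid_of_gap (k : ℕ) (hk : 1 ≤ k)
    (n : Fin k → ℕ) (hn : ∀ i, 0 < n i) (x : Fin k → Bool) :
    nbPost n x = 1 / (1 + Real.exp (-(nbGap n x))) := by
  have hJt : 0 < nbJoint n x true := by
    unfold nbJoint
    have : 0 < ∏ i, nbTheta (n i) (x i) true :=
      Finset.prod_pos fun i _ => nbTheta_true_pos (hn i) (x i)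
    linarith
  have hJf : nbJoint n x false = Real.exp (-(nbGap n x)) * nbJoint n x true := by
    unfold nbJoint
    have : ∏ i, nbTheta (n i) (x i) false
        = ∏ i, Real.exp (if x i then (n i : ℝ) else -(n i : ℝ)) * nbTheta (n i) (x i) true := by
      refine Finset.prod_congr rfl fun i _ => nbTheta_false_eq (hn i) (x i)
    rw [this, Finset.prod_mul_distrib, ← Real.exp_sum]
    have hsum : ∑ i, (if x i then (n i : ℝ) else -(n i : ℝ)) = -(nbGap n x) := by
      unfold nbGap
      rw [Finset.sum_ite, Finset.sum_neg_distrib]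
      simp only [Bool.not_eq_true]
      push_cast
      ring
    rw [hsum]; ring
  unfold nbPost nbMarg
  rw [hJf]
  rw [div_eq_div_iff (by positivity) (by positivity)]
  ring
end

section
/- With the construction from the proof of Theorem 1, the normalizing constant Z := Σ_{x ∈ Bool^k} P(x)·1[P(y = true | x) ≥ 2/3] satisfies Z = (1/2)·Σ_{x ∈ Bool^k} P(x)·1[d(x) ≠ 0] = (1/2)·(1 − Σ_{x : d(x) = 0} P(x)). -/
lemma nb_exp_lt (m : ℕ) (hm : 0 < m) : Real.exp (-(m : ℝ)) < Real.exp (m : ℝ) := by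
  apply Real.exp_lt_exp.mpr
  have : (0:ℝ) < m := by exact_mod_cast hm
  linarith

lemma nb_core (m : ℕ) (hm : 0 < m) :
    Real.exp (m:ℝ) * ((1 - Real.exp (-(m:ℝ))) / (Real.exp (m:ℝ) - Real.exp (-(m:ℝ)))) =
      1 - (1 - Real.exp (-(m:ℝ))) / (Real.exp (m:ℝ) - Real.exp (-(m:ℝ))) := by
  have h := nb_exp_lt m hm
  have hd : Real.exp (m:ℝ) - Real.exp (-(m:ℝ)) ≠ 0 := by linarith
  have he : Real.exp (m:ℝ) * Real.exp (-(m:ℝ)) = 1 := by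
    rw [← Real.exp_add]; simp
  field_simp
  nlinarith [he]

lemma nb_theta_flip (m : ℕ) (hm : 0 < m) (b : Bool) :
    nbTheta m b false = nbTheta m (!b) true := by
  have hc := nb_core m hm
  cases b
  · simp only [nbTheta, Bool.not_false]
    linarith
  · simp only [nbTheta, Bool.not_true]
    linarith

lemma nb_theta_pos (m : ℕ) (hm : 0 < m) (b y : Bool) : 0 < nbTheta m b y := by
  have h := nb_exp_lt m hm
  have hm' : (1:ℝ) ≤ m := by exact_mod_cast hm
  have h1 : Real.exp (-(m:ℝ)) < 1 := by
    rw [← Real.exp_zero]; exact Real.exp_lt_exp.mpr (by linarith)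
  have h2 : (1:ℝ) < Real.exp (m:ℝ) := by
    rw [← Real.exp_zero]; exact Real.exp_lt_exp.mpr (by linarith)
  have hT : ∀ c : Bool, 0 < nbTheta m c true := by
    intro c
    cases c
    · simp only [nbTheta]
      rw [sub_pos, div_lt_one (by linarith)]
      linarith
    · simp only [nbTheta]
      exact div_pos (by linarith) (by linarith)
  cases y
  · rw [nb_theta_flip m hm b]; exact hT _
  · exact hT b

lemma nb_theta_ratio (m : ℕ) (hm : 0 < m) (b : Bool) :
    nbTheta m b true = Real.exp (if b = true then -(m:ℝ) else (m:ℝ)) * nbTheta m b false := by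
  have hc := nb_core m hm
  cases b
  · simp only [nbTheta]
    rw [if_neg (by simp : ¬(false = true)), hc, sub_sub_cancel, hc]
  · simp only [nbTheta]
    rw [if_pos trivial]
    rw [← mul_assoc, ← Real.exp_add]
    simp

lemma nb_theta_sum (m : ℕ) (y : Bool) : nbTheta m true y + nbTheta m false y = 1 := by
  cases y <;> simp [nbTheta]

/-- The normalizing constant `Z = ∑_x P x * 1[P(y = true | x) ≥ 2/3]` satisfies
`Z = (1/2) * ∑_x P x * 1[d x ≠ 0] = (1/2) * (1 - ∑_{x : d x = 0} P x)`. -/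
theorem naive_bayes_normalizing_constant (k : ℕ) (hk : 1 ≤ k)
    (n : Fin k → ℕ) (hn : ∀ i, 0 < n i)
    (Z : ℝ)
    (hZ : Z = ∑ x : Fin k → Bool,
      nbMarg n x * (if 2 / 3 ≤ nbPost n x then (1 : ℝ) else 0)) :
    Z = (1 / 2) * ∑ x : Fin k → Bool,
          nbMarg n x * (if nbGap n x ≠ 0 then (1 : ℝ) else 0) ∧
      Z = (1 / 2) *
          (1 - ∑ x ∈ Finset.univ.filter (fun x : Fin k → Bool => nbGap n x = 0),
            nbMarg n x) := by
  classical
  have hJpos : ∀ (x : Fin k → Bool) (y : Bool), 0 < nbJoint n x y := by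
    intro x y
    unfold nbJoint
    have : 0 < ∏ i, nbTheta (n i) (x i) y :=
      Finset.prod_pos fun i _ => nb_theta_pos (n i) (hn i) _ _
    linarith
  have hMpos : ∀ x, 0 < nbMarg n x := by
    intro x
    unfold nbMarg
    linarith [hJpos x true, hJpos x false]
  have hratio : ∀ x, nbJoint n x true = Real.exp (nbGap n x) * nbJoint n x false := by
    intro x
    unfold nbJoint
    rw [Finset.prod_congr rfl (fun i _ => nb_theta_ratio (n i) (hn i) (x i)),
      Finset.prod_mul_distrib, ← Real.exp_sum]
    have hs : (∑ i, (if x i = true then -(n i:ℝ) else (n i:ℝ))) = nbGap n x := by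
      rw [Finset.sum_ite]
      unfold nbGap
      rw [Finset.sum_neg_distrib,
        show (Finset.univ.filter fun i => ¬ x i = true)
            = Finset.univ.filter fun i => x i = false from
          Finset.filter_congr (fun i _ => by simp)]
      ring
    rw [hs]
    ring
  have hpost : ∀ x, nbPost n x = Real.exp (nbGap n x) / (Real.exp (nbGap n x) + 1) := by
    intro x
    have hF := hJpos x false
    have hE := Real.exp_pos (nbGap n x)
    unfold nbPost nbMarg
    rw [hratio x]
    rw [div_eq_div_iff (by nlinarith) (by nlinarith)]
    ring
  have hgap1 : ∀ x, 0 < nbGap n x → (1:ℝ) ≤ nbGap n x := by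
    intro x hx
    have hcast : nbGap n x
        = ((∑ i ∈ Finset.univ.filter (fun i => x i = false), n i : ℕ) : ℝ)
          - ((∑ i ∈ Finset.univ.filter (fun i => x i = true), n i : ℕ) : ℝ) := by
      unfold nbGap
      push_cast
      ring
    rw [hcast] at hx ⊢
    have h1 : (∑ i ∈ Finset.univ.filter (fun i => x i = true), n i)
        < ∑ i ∈ Finset.univ.filter (fun i => x i = false), n i := by
      exact_mod_cast sub_pos.mp hx
    have h2 : ((∑ i ∈ Finset.univ.filter (fun i => x i = true), n i) + 1 : ℕ)
        ≤ ∑ i ∈ Finset.univ.filter (fun i => x i = false), n i := h1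
    have h3 : ((∑ i ∈ Finset.univ.filter (fun i => x i = true), n i : ℕ) : ℝ) + 1
        ≤ ((∑ i ∈ Finset.univ.filter (fun i => x i = false), n i : ℕ) : ℝ) := by
      exact_mod_cast h2
    linarith
  have hiff : ∀ x, (2/3 ≤ nbPost n x ↔ 0 < nbGap n x) := by
    intro x
    rw [hpost x]
    have hE := Real.exp_pos (nbGap n x)
    rw [div_le_div_iff₀ (by norm_num) (by linarith)]
    constructor
    · intro h
      by_contra hc
      push_neg at hc
      have : Real.exp (nbGap n x) ≤ 1 := by
        rw [← Real.exp_zero]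
        exact Real.exp_le_exp.mpr hc
      linarith
    · intro h
      have h1 := hgap1 x h
      have h2 : (2:ℝ) ≤ Real.exp (nbGap n x) := by
        have ha := Real.add_one_le_exp (1:ℝ)
        have h3 : Real.exp 1 ≤ Real.exp (nbGap n x) := Real.exp_le_exp.mpr h1
        linarith
      linarith
  have hflipJ : ∀ (x : Fin k → Bool) (y : Bool),
      nbJoint n (fun i => !(x i)) y = nbJoint n x (!y) := by
    intro x y
    unfold nbJoint
    congr 1
    apply Finset.prod_congr rfl
    intro i _
    cases y
    · rw [nb_theta_flip (n i) (hn i) (!(x i))]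
      simp
    · rw [← nb_theta_flip (n i) (hn i) (x i)]
      simp
  have hflipM : ∀ x, nbMarg n (fun i => !(x i)) = nbMarg n x := by
    intro x
    unfold nbMarg
    rw [hflipJ x true, hflipJ x false]
    simp only [Bool.not_true, Bool.not_false]
    ring
  have hflipG : ∀ x, nbGap n (fun i => !(x i)) = - nbGap n x := by
    intro x
    unfold nbGap
    rw [show (Finset.univ.filter fun i => (!(x i)) = false)
          = Finset.univ.filter fun i => x i = true from
        Finset.filter_congr (fun i _ => by simp),
      show (Finset.univ.filter fun i => (!(x i)) = true)
          = Finset.univ.filter fun i => x i = false from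
        Finset.filter_congr (fun i _ => by simp)]
    ring
  have htotJ : ∀ y : Bool, (∑ x : Fin k → Bool, ∏ i, nbTheta (n i) (x i) y) = 1 := by
    intro y
    rw [← Fintype.prod_sum fun i (b : Bool) => nbTheta (n i) b y]
    apply Finset.prod_eq_one
    intro i _
    rw [Fintype.sum_bool]
    exact nb_theta_sum (n i) y
  have htot : ∑ x : Fin k → Bool, nbMarg n x = 1 := by
    unfold nbMarg nbJoint
    rw [Finset.sum_add_distrib, ← Finset.mul_sum, ← Finset.mul_sum, htotJ, htotJ]
    norm_num
  have hswap :
      (∑ x : Fin k → Bool, nbMarg n x * (if 0 < nbGap n x then (1:ℝ) else 0))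
        = ∑ x : Fin k → Bool, nbMarg n x * (if nbGap n x < 0 then (1:ℝ) else 0) := by
    apply Fintype.sum_bijective (fun (x : Fin k → Bool) => fun i => !(x i))
    · exact Function.Involutive.bijective (fun x => by funext i; simp)
    · intro x
      rw [hflipM x, hflipG x]
      simp only [neg_lt_zero]
  have hZ' : Z = ∑ x : Fin k → Bool, nbMarg n x * (if 0 < nbGap n x then (1:ℝ) else 0) := by
    rw [hZ]
    apply Finset.sum_congr rfl
    intro x _
    congr 1
    by_cases h : 0 < nbGap n x
    · rw [if_pos h, if_pos ((hiff x).mpr h)]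
    · rw [if_neg h, if_neg (fun hc => h ((hiff x).mp hc))]
  have hsplit : ∀ x : Fin k → Bool,
      nbMarg n x * (if nbGap n x ≠ 0 then (1:ℝ) else 0)
        = nbMarg n x * (if 0 < nbGap n x then (1:ℝ) else 0)
          + nbMarg n x * (if nbGap n x < 0 then (1:ℝ) else 0) := by
    intro x
    rcases lt_trichotomy (nbGap n x) 0 with h | h | h
    · rw [if_pos h.ne, if_neg (asymm h), if_pos h]; ring
    · rw [if_neg (by simp [h]), if_neg (by simp [h]), if_neg (by simp [h])]; ring
    · rw [if_pos h.ne', if_pos h, if_neg (asymm h)]; ring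
  have hkey : (∑ x : Fin k → Bool, nbMarg n x * (if nbGap n x ≠ 0 then (1:ℝ) else 0))
      = 2 * Z := by
    rw [Finset.sum_congr rfl (fun x _ => hsplit x), Finset.sum_add_distrib, ← hswap, ← hZ']
    ring
  have hone : (∑ x : Fin k → Bool, nbMarg n x * (if nbGap n x ≠ 0 then (1:ℝ) else 0))
      = 1 - ∑ x ∈ Finset.univ.filter (fun x : Fin k → Bool => nbGap n x = 0), nbMarg n x := by
    have hpt : ∀ x : Fin k → Bool,
        nbMarg n x * (if nbGap n x ≠ 0 then (1:ℝ) else 0)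
          = nbMarg n x - (if nbGap n x = 0 then nbMarg n x else 0) := by
      intro x
      by_cases h : nbGap n x = 0 <;> simp [h]
    rw [Finset.sum_congr rfl (fun x _ => hpt x), Finset.sum_sub_distrib, htot,
      Finset.sum_filter]
  constructor
  · linarith [hkey]
  · rw [← hone]
    linarith [hkey]
end

section
/- Let A_1, …, A_k be finite nonempty types, let V be a finite subset of ℝ, and let p be a probability mass function on (A_1 × ⋯ × A_k) × V. Fix v ∈ ℝ and let E denote the event {(a, w) : w ≥ v}. For events C with p(C) > 0 write p(E | C) := p(E ∩ C)/p(C), and for a tuple a = (a^1, …, a^k) write a^{<i} for the event that the first i − 1 coordinates equal a^1, …, a^{i−1} (with the convention that a term with zero prefix probability contributes 0). Suppose p(a^{<i}) > 0 and p(E ∩ a^{<i}) > 0 for all i ≤ k + 1 (where a^{<k+1} is the event of the full tuple a). Then: (i) for each i, Σ_{b ∈ A_i} p(a^i = b | a^{<i}) · p(E | a^{<i} ∩ {a^i = b}) = p(E | a^{<i}); and (ii) ∏_{i=1}^k [ p(a^i | a^{<i}) · p(E | a^{≤i}) / p(E | a^{<i}) ] = p(a | E), i.e., sampling each coordinate a^i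 from the per-dimension distribution proportional to p(a^i | a^{<i}) · p(E | a^{≤i}) produces exactly the conditional distribution of a given the event V ≥ v. -/
/-- The probability of an event `C` under a mass function `p` on a finite type. -/
noncomputable def evProb {Ω : Type*} [Fintype Ω] (p : Ω → ℝ) (C : Set Ω) : ℝ :=
  ∑ ω, C.indicator p ω

/-- The conditional probability `p(E | C)`, with the convention that it is `0`
whenever `p(C) = 0`. -/
noncomputable def evCondProb {Ω : Type*} [Fintype Ω] (p : Ω → ℝ) (E C : Set Ω) : ℝ :=
  if evProb p C = 0 then 0 else evProb p (E ∩ C) / evProb p C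

/-- The event `a^{<i}` that the first `i` coordinates of the tuple component agree
with `a` (here prefixes are indexed by their length `i ∈ {0, …, k}`, so this is the
paper's `a^{<i+1}`). -/
def prefixEvent {k : ℕ} {A : Fin k → Type*} {W : Type*}
    (a : ∀ i, A i) (i : ℕ) : Set ((∀ j, A j) × W) :=
  {ω | ∀ j : Fin k, (j : ℕ) < i → ω.1 j = a j}


section Aux

variable {Ω : Type*} [Fintype Ω]

lemma evProb_nonneg (p : Ω → ℝ) (hp0 : ∀ ω, 0 ≤ p ω) (C : Set Ω) : 0 ≤ evProb p C :=
  Finset.sum_nonneg fun ω _ => Set.indicator_nonneg (fun ω _ => hp0 ω) ω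

lemma evProb_mono (p : Ω → ℝ) (hp0 : ∀ ω, 0 ≤ p ω) {C D : Set Ω} (h : C ⊆ D) :
    evProb p C ≤ evProb p D :=
  Finset.sum_le_sum fun ω _ => Set.indicator_le_indicator_of_subset h (fun ω => hp0 ω) ω

lemma evProb_fiber_sum {ι : Type*} [Fintype ι] (p : Ω → ℝ) (S : Set Ω) (g : Ω → ι) :
    ∑ b, evProb p (S ∩ {ω | g ω = b}) = evProb p S := by
  classical
  simp only [evProb, Set.indicator_apply, Set.mem_inter_iff, Set.mem_setOf_eq]
  rw [Finset.sum_comm]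
  refine Finset.sum_congr rfl fun ω _ => ?_
  by_cases h : ω ∈ S
  · simp [h]
  · simp [h]

lemma prefixEvent_zero {k : ℕ} {A : Fin k → Type*} {W : Type*} (a : ∀ i, A i) :
    prefixEvent (W := W) a 0 = Set.univ := by
  ext ω; simp [prefixEvent]

lemma prefixEvent_succ {k : ℕ} {A : Fin k → Type*} {W : Type*} (a : ∀ i, A i) (i : Fin k) :
    prefixEvent (W := W) a ((i : ℕ) + 1) =
      prefixEvent a (i : ℕ) ∩ {ω | ω.1 i = a i} := by
  ext ω
  simp only [prefixEvent, Set.mem_inter_iff, Set.mem_setOf_eq]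
  constructor
  · intro h
    exact ⟨fun j hj => h j (Nat.lt_succ_of_lt hj), h i (Nat.lt_succ_self _)⟩
  · rintro ⟨h1, h2⟩ j hj
    rcases Nat.lt_succ_iff_lt_or_eq.mp hj with h | h
    · exact h1 j h
    · have hj' : j = i := Fin.ext h
      subst hj'; exact h2

lemma prefixEvent_last {k : ℕ} {A : Fin k → Type*} {W : Type*} (a : ∀ i, A i) :
    prefixEvent (W := W) a k = {ω | ω.1 = a} := by
  ext ω
  simp only [prefixEvent, Set.mem_setOf_eq]
  constructor
  · intro h; funext j; exact h j j.isLt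
  · intro h j _; rw [h]

lemma prod_div_telescope (f : ℕ → ℝ) (k : ℕ) (hf : ∀ i ≤ k, f i ≠ 0) :
    ∏ i ∈ Finset.range k, f (i + 1) / f i = f k / f 0 := by
  induction k with
  | zero =>
    rw [Finset.range_zero, Finset.prod_empty, div_self (hf 0 le_rfl)]
  | succ n ih =>
    rw [Finset.prod_range_succ, ih (fun i hi => hf i (hi.trans n.le_succ))]
    have h0 := hf 0 (Nat.zero_le _)
    have hn := hf n (Nat.le_succ _)
    field_simp

end Aux

/-- Let `p` be a probability mass function on `(A₁ × ⋯ × A_k) × V`, where the `Aᵢ` are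
finite nonempty types and `V` a finite subset of `ℝ`; fix `v ∈ ℝ` and let `E` be the
event that the `V`-component is at least `v`. Suppose every prefix event `a^{<i}` and
every `E ∩ a^{<i}` has positive probability. Then (i) for each coordinate `i`, the
per-dimension reweighted probabilities `p(aⁱ = b | a^{<i}) * p(E | a^{<i} ∩ {aⁱ = b})`
sum over `b` to `p(E | a^{<i})`; and (ii) the product over `i` of
`p(aⁱ | a^{<i}) * p(E | a^{≤i}) / p(E | a^{<i})` equals `p(a | E)`: autoregressive
per-dimension reweighting produces exactly the conditional distribution given `V ≥ v`. -/
theorem autoregressive_reweighting_exact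
    (k : ℕ) (A : Fin k → Type*) [∀ i, Fintype (A i)] [∀ i, Nonempty (A i)]
    (V : Finset ℝ)
    (p : ((∀ i, A i) × {r : ℝ // r ∈ V}) → ℝ)
    (hp0 : ∀ ω, 0 ≤ p ω) (hp1 : ∑ ω, p ω = 1)
    (v : ℝ)
    (E : Set ((∀ i, A i) × {r : ℝ // r ∈ V}))
    (hE : E = {ω | v ≤ (ω.2 : ℝ)})
    (a : ∀ i, A i)
    (hpre : ∀ i ≤ k, 0 < evProb p (prefixEvent a i) ∧
      0 < evProb p (E ∩ prefixEvent a i)) :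
    (∀ i : Fin k,
      ∑ b : A i,
        evCondProb p {ω | ω.1 i = b} (prefixEvent a (i : ℕ)) *
          evCondProb p E (prefixEvent a (i : ℕ) ∩ {ω | ω.1 i = b}) =
        evCondProb p E (prefixEvent a (i : ℕ))) ∧
      (∏ i : Fin k,
        evCondProb p {ω | ω.1 i = a i} (prefixEvent a (i : ℕ)) *
          evCondProb p E (prefixEvent a ((i : ℕ) + 1)) /
            evCondProb p E (prefixEvent a (i : ℕ))) =
        evCondProb p {ω | ω.1 = a} E := by
  classical
  have hQmain : ∀ i : ℕ, i ≤ k → evProb p (E ∩ prefixEvent a i) ≠ 0 :=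
    fun i hi => ne_of_gt (hpre i hi).2
  have hPmain : ∀ i : ℕ, i ≤ k → evProb p (prefixEvent a i) ≠ 0 :=
    fun i hi => ne_of_gt (hpre i hi).1
  constructor
  · intro i
    have hP := hPmain i (le_of_lt i.isLt)
    have key : ∀ b : A i,
        evCondProb p {ω | ω.1 i = b} (prefixEvent a (i : ℕ)) *
          evCondProb p E (prefixEvent a (i : ℕ) ∩ {ω | ω.1 i = b}) =
        evProb p (E ∩ (prefixEvent a (i : ℕ) ∩ {ω | ω.1 i = b})) /
          evProb p (prefixEvent a (i : ℕ)) := by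
      intro b
      by_cases hb : evProb p (prefixEvent a (i : ℕ) ∩ {ω | ω.1 i = b}) = 0
      · have hEb : evProb p (E ∩ (prefixEvent a (i : ℕ) ∩ {ω | ω.1 i = b})) = 0 :=
          le_antisymm (hb ▸ evProb_mono p hp0 Set.inter_subset_right)
            (evProb_nonneg p hp0 _)
        simp only [evCondProb]
        rw [if_pos hb, mul_zero, hEb, zero_div]
      · simp only [evCondProb]
        rw [if_neg hP, if_neg hb,
          Set.inter_comm {ω | ω.1 i = b} (prefixEvent a (i : ℕ))]
        field_simp
    rw [Finset.sum_congr rfl (fun b _ => key b), ← Finset.sum_div]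
    have : ∑ b : A i, evProb p (E ∩ (prefixEvent a (i : ℕ) ∩ {ω | ω.1 i = b})) =
        evProb p (E ∩ prefixEvent a (i : ℕ)) := by
      have := evProb_fiber_sum p (E ∩ prefixEvent a (i : ℕ)) (fun ω => ω.1 i)
      rw [← this]
      exact Finset.sum_congr rfl fun b _ => by rw [Set.inter_assoc]
    rw [this]
    simp only [evCondProb]
    rw [if_neg hP]
  · have key : ∀ i : Fin k,
        evCondProb p {ω | ω.1 i = a i} (prefixEvent a (i : ℕ)) *
          evCondProb p E (prefixEvent a ((i : ℕ) + 1)) /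
            evCondProb p E (prefixEvent a (i : ℕ)) =
        evProb p (E ∩ prefixEvent a ((i : ℕ) + 1)) /
          evProb p (E ∩ prefixEvent a (i : ℕ)) := by
      intro i
      have hP1 := hPmain i (le_of_lt i.isLt)
      have hP2 := hPmain ((i : ℕ) + 1) i.isLt
      have hQ1 := hQmain i (le_of_lt i.isLt)
      have hQ2 := hQmain ((i : ℕ) + 1) i.isLt
      simp only [evCondProb]
      rw [if_neg hP1, if_neg hP2, if_neg hP1,
        Set.inter_comm {ω | ω.1 i = a i} (prefixEvent a (i : ℕ)),
        ← prefixEvent_succ a i]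
      field_simp
    rw [Finset.prod_congr rfl (fun i _ => key i), Fin.prod_univ_eq_prod_range
      (fun i => evProb p (E ∩ prefixEvent a (i + 1)) / evProb p (E ∩ prefixEvent a i)) k,
      prod_div_telescope _ k hQmain, prefixEvent_zero, Set.inter_univ,
      prefixEvent_last]
    simp only [evCondProb]
    rw [if_neg (by
        have := hQmain 0 (Nat.zero_le _)
        rwa [prefixEvent_zero, Set.inter_univ] at this),
      Set.inter_comm]
end
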